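/- arXiv:1512.08207 — 5 statements merged into one kernel-verified Lean document; each statement's English description precedes it below -/
import Mathlib

section
/- Let the fundamental graph data with a set S be given, let Q : V* → ℝ be a potential, and let α, α° : A* → ℝ be two 1-forms both vanishing outside S ∪ S̄ (with the same index map τ). Set C = 2 · max_{u∈V*} Σ_{e ∈ S∪S̄, o(e)=u} |sin((α°(e) − α(e))/2)|. Then for every n ∈ {1,…,ν} and every θ ∈ ℝ^d one has |λ_{α°,n}(θ) − λ_{α,n}(θ)| ≤ C; in particular the band endpoints satisfy |sup_θ λ_{α°,n}(θ) − sup_θ λ_{α,n}(θ)| ≤ C and |inf_θ λ_{α°,n}(θ) − inf_θ λ_{α,n}(θ)| ≤ C. -/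
open scoped BigOperators
open Matrix Polynomial

noncomputable section

/-- Phase `α(e) + ⟨τ(e), θ⟩` of an edge. -/
def edgePhase {E : Type*} {d : ℕ} (α : E → ℝ) (τ : E → Fin d → ℤ)
    (θ : Fin d → ℝ) (e : E) : ℝ :=
  α e + ∑ j, (τ e j : ℝ) * θ j

/-- Degree of a vertex: the number of oriented edges starting at it. -/
def vertexDeg {E : Type*} [Fintype E] {ν : ℕ} (o : E → Fin ν) (v : Fin ν) : ℕ :=
  (Finset.univ.filter fun e => o e = v).card

/-- The fiber magnetic Laplacian `Δ_α(θ)` as a `ν × ν` complex matrix. -/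
def fiberLap {E : Type*} [Fintype E] {d ν : ℕ} (o t : E → Fin ν)
    (τ : E → Fin d → ℤ) (α : E → ℝ) (θ : Fin d → ℝ) : Matrix (Fin ν) (Fin ν) ℂ :=
  fun v u => (vertexDeg o v : ℂ) * (if v = u then 1 else 0)
    - ∑ e ∈ Finset.univ.filter (fun e => o e = v ∧ t e = u),
        Complex.exp (Complex.I * (edgePhase α τ θ e : ℝ))

/-- The fiber magnetic Schrödinger operator `H_α(θ) = Δ_α(θ) + diag Q`. -/
def fiberSch {E : Type*} [Fintype E] {d ν : ℕ} (o t : E → Fin ν)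
    (τ : E → Fin d → ℤ) (α : E → ℝ) (Q : Fin ν → ℝ) (θ : Fin d → ℝ) :
    Matrix (Fin ν) (Fin ν) ℂ :=
  fiberLap o t τ α θ + Matrix.diagonal (fun v => (Q v : ℂ))

/-! The difference `H_{α°}(θ) - H_α(θ)` is a Hermitian matrix carried by the edges of `S ∪ S̄`:
an edge `e` contributes `exp(i φ_α(e)) - exp(i φ_{α°}(e))`, whose modulus
`2 |sin ((α°(e) - α(e)) / 2)|` does not depend on `θ` since the `τ`-parts of the two phases cancel.
So its row sums are at most `C`, and the Schur test bounds its quadratic form by `C ‖x‖²`.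
Weyl's inequality, proved by the Courant–Fischer dimension count (the span of the first `n + 1`
eigenvectors of one matrix meets the span of the eigenvectors of the other from the `n`-th on),
turns this into `|λ_{α°,n}(θ) - λ_{α,n}(θ)| ≤ C`. A uniform bound on the difference of two
functions of `θ` bounds the difference of their suprema and of their infima. -/

open scoped InnerProductSpace ComplexConjugate

section Weyl
variable {𝕜 E ι : Type*} [RCLike 𝕜] [NormedAddCommGroup E] [InnerProductSpace 𝕜 E] [Fintype ι]

namespace OrthonormalBasis

lemma inner_eq_zero_of_mem_span_image (v : OrthonormalBasis ι 𝕜 E) {I : Set ι} {x : E}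
    (hx : x ∈ Submodule.span 𝕜 (v '' I)) {i : ι} (hi : i ∉ I) : ⟪v i, x⟫_𝕜 = 0 := by
  have hle : Submodule.span 𝕜 (v '' I) ≤ (𝕜 ∙ v i)ᗮ := by
    rw [Submodule.span_le]
    rintro _ ⟨j, hj, rfl⟩
    exact Submodule.mem_orthogonal_singleton_iff_inner_right.2
      (v.orthonormal.2 fun hij => hi (hij ▸ hj))
  exact Submodule.mem_orthogonal_singleton_iff_inner_right.1 (hle hx)

lemma finrank_span_image (v : OrthonormalBasis ι 𝕜 E) (I : Finset ι) :
    Module.finrank 𝕜 (Submodule.span 𝕜 (v '' I)) = I.card := by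
  rw [Set.image_eq_range]
  exact (finrank_span_eq_card (v.orthonormal.linearIndependent.comp _ Subtype.val_injective)).trans
    (by simp)

variable {T : E →ₗ[𝕜] E} {a : ι → ℝ}

lemma re_inner_apply_self_eq_sum (v : OrthonormalBasis ι 𝕜 E)
    (hv : ∀ i, T (v i) = (a i : 𝕜) • v i) (x : E) :
    RCLike.re ⟪x, T x⟫_𝕜 = ∑ i, a i * ‖⟪v i, x⟫_𝕜‖ ^ 2 := by
  have hTx : T x = ∑ i, ((a i : 𝕜) * ⟪v i, x⟫_𝕜) • v i := by
    conv_lhs => rw [← v.sum_repr' x]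
    simp only [map_sum, map_smul, hv, smul_smul, mul_comm]
  rw [hTx]
  nth_rw 1 [← v.sum_repr' x]
  rw [v.orthonormal.inner_sum, map_sum]
  refine Finset.sum_congr rfl fun i _ => ?_
  rw [mul_left_comm, RCLike.conj_mul]
  norm_cast

lemma re_inner_apply_self_le_of_mem_span (v : OrthonormalBasis ι 𝕜 E)
    (hv : ∀ i, T (v i) = (a i : 𝕜) • v i) {I : Set ι} {c : ℝ} (hc : ∀ i ∈ I, a i ≤ c)
    {x : E} (hx : x ∈ Submodule.span 𝕜 (v '' I)) :
    RCLike.re ⟪x, T x⟫_𝕜 ≤ c * ‖x‖ ^ 2 := by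
  rw [v.re_inner_apply_self_eq_sum hv, ← v.sum_sq_norm_inner_right x, Finset.mul_sum]
  refine Finset.sum_le_sum fun i _ => ?_
  by_cases hi : i ∈ I
  · gcongr
    exact hc i hi
  · simp [v.inner_eq_zero_of_mem_span_image hx hi]

lemma le_re_inner_apply_self_of_mem_span (v : OrthonormalBasis ι 𝕜 E)
    (hv : ∀ i, T (v i) = (a i : 𝕜) • v i) {I : Set ι} {c : ℝ} (hc : ∀ i ∈ I, c ≤ a i)
    {x : E} (hx : x ∈ Submodule.span 𝕜 (v '' I)) :
    c * ‖x‖ ^ 2 ≤ RCLike.re ⟪x, T x⟫_𝕜 := by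
  rw [v.re_inner_apply_self_eq_sum hv, ← v.sum_sq_norm_inner_right x, Finset.mul_sum]
  refine Finset.sum_le_sum fun i _ => ?_
  by_cases hi : i ∈ I
  · gcongr
    exact hc i hi
  · simp [v.inner_eq_zero_of_mem_span_image hx hi]

end OrthonormalBasis

variable {n : ℕ} {T T' : E →ₗ[𝕜] E} {v w : OrthonormalBasis (Fin n) 𝕜 E} {a b : Fin n → ℝ}

theorem eigenvalue_le_add_of_re_inner_le (ha : Monotone a) (hb : Monotone b)
    (hv : ∀ i, T (v i) = (a i : 𝕜) • v i) (hw : ∀ i, T' (w i) = (b i : 𝕜) • w i) {C : ℝ}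
    (hC : ∀ x, RCLike.re ⟪x, T' x⟫_𝕜 ≤ RCLike.re ⟪x, T x⟫_𝕜 + C * ‖x‖ ^ 2) (k : Fin n) :
    b k ≤ a k + C := by
  have : FiniteDimensional 𝕜 E := v.toBasis.finiteDimensional_of_finite
  set W := Submodule.span 𝕜 (v '' ↑(Finset.Iic k))
  set W' := Submodule.span 𝕜 (w '' ↑(Finset.Ici k))
  -- `W` and `W'` meet since `dim W + dim W' = (k + 1) + (n - k) > n`.
  obtain ⟨x, hxW, hxW', hx0⟩ : ∃ x ∈ W, x ∈ W' ∧ x ≠ 0 := by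
    by_contra! h
    have hdim := Submodule.finrank_add_finrank_le_of_disjoint (Submodule.disjoint_def.2 h)
    rw [v.finrank_span_image, w.finrank_span_image, Fin.card_Iic, Fin.card_Ici,
      Module.finrank_eq_card_basis v.toBasis, Fintype.card_fin] at hdim
    omega
  have hupper := v.re_inner_apply_self_le_of_mem_span hv (fun i hi => ha (Finset.mem_Iic.1 hi)) hxW
  have hlower := w.le_re_inner_apply_self_of_mem_span hw (fun i hi => hb (Finset.mem_Ici.1 hi)) hxW'
  have hx : 0 < ‖x‖ ^ 2 := by positivity
  nlinarith [hC x]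

theorem abs_eigenvalue_sub_le_of_abs_re_inner_sub_le (ha : Monotone a) (hb : Monotone b)
    (hv : ∀ i, T (v i) = (a i : 𝕜) • v i) (hw : ∀ i, T' (w i) = (b i : 𝕜) • w i) {C : ℝ}
    (hC : ∀ x, |RCLike.re ⟪x, T' x⟫_𝕜 - RCLike.re ⟪x, T x⟫_𝕜| ≤ C * ‖x‖ ^ 2) (k : Fin n) :
    |b k - a k| ≤ C := by
  have h₁ := eigenvalue_le_add_of_re_inner_le ha hb hv hw
    (fun x => by linarith [(abs_le.1 (hC x)).2]) k
  have h₂ := eigenvalue_le_add_of_re_inner_le hb ha hw hv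
    (fun x => by linarith [(abs_le.1 (hC x)).1]) k
  exact abs_sub_le_iff.2 ⟨by linarith, by linarith⟩

end Weyl

lemma eq_of_monotone_of_map_univ_eq {α : Type*} [LinearOrder α] {n : ℕ} {f g : Fin n → α}
    (hf : Monotone f) (hg : Monotone g)
    (h : Finset.univ.val.map f = Finset.univ.val.map g) : f = g := by
  refine List.ofFn_injective (List.Perm.eq_of_sortedLE hf.sortedLE_ofFn hg.sortedLE_ofFn ?_)
  rwa [← Multiset.coe_eq_coe, ← Fin.univ_val_map, ← Fin.univ_val_map]

namespace Matrix.IsHermitian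

variable {𝕜 : Type*} [RCLike 𝕜]

theorem norm_inner_toEuclideanLin_self_le {ι : Type*} [Fintype ι] [DecidableEq ι] {M : Matrix ι ι 𝕜}
    (hM : M.IsHermitian) {K : ℝ} (hK : ∀ i, ∑ j, ‖M i j‖ ≤ K) (x : EuclideanSpace 𝕜 ι) :
    ‖⟪x, toEuclideanLin M x⟫_𝕜‖ ≤ K * ‖x‖ ^ 2 := by
  have hswap : ∑ i, ∑ j, ‖M i j‖ * ‖x j‖ ^ 2 = ∑ i, ∑ j, ‖M i j‖ * ‖x i‖ ^ 2 := by
    rw [Finset.sum_comm]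
    refine Finset.sum_congr rfl fun i _ => Finset.sum_congr rfl fun j _ => ?_
    rw [← hM.apply i j, norm_star]
  calc ‖⟪x, toEuclideanLin M x⟫_𝕜‖
      = ‖∑ i, conj (x i) * ∑ j, M i j * x j‖ := by
        simp [PiLp.inner_apply, toLpLin_apply, mulVec, dotProduct, mul_comm]
    _ ≤ ∑ i, ∑ j, ‖M i j‖ * (‖x i‖ * ‖x j‖) := by
        refine (norm_sum_le _ _).trans (Finset.sum_le_sum fun i _ => ?_)
        rw [norm_mul, RCLike.norm_conj]
        refine (mul_le_mul_of_nonneg_left (norm_sum_le _ _) (norm_nonneg _)).trans_eq ?_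
        rw [Finset.mul_sum]
        exact Finset.sum_congr rfl fun j _ => by rw [norm_mul]; ring
    _ ≤ ∑ i, ∑ j, ‖M i j‖ * ((‖x i‖ ^ 2 + ‖x j‖ ^ 2) / 2) := by
        gcongr with i _ j _
        nlinarith [sq_nonneg (‖x i‖ - ‖x j‖)]
    _ = (∑ i, ∑ j, ‖M i j‖ * ‖x i‖ ^ 2 + ∑ i, ∑ j, ‖M i j‖ * ‖x j‖ ^ 2) / 2 := by
        simp only [← Finset.sum_add_distrib, Finset.sum_div]
        exact Finset.sum_congr rfl fun i _ => Finset.sum_congr rfl fun j _ => by ring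
    _ = ∑ i, (∑ j, ‖M i j‖) * ‖x i‖ ^ 2 := by
        rw [hswap]
        simp only [Finset.sum_mul]
        ring
    _ ≤ ∑ i, K * ‖x i‖ ^ 2 := by
        gcongr with i _
        exact hK i
    _ = K * ‖x‖ ^ 2 := by
        rw [← Finset.mul_sum, EuclideanSpace.norm_sq_eq]

variable {n : ℕ} {A B : Matrix (Fin n) (Fin n) 𝕜} {a b : Fin n → ℝ}

lemma map_eigenvalues_eq_of_charpoly (hA : A.IsHermitian)
    (hc : A.charpoly = ∏ i, (X - C (a i : 𝕜))) :
    Finset.univ.val.map hA.eigenvalues = Finset.univ.val.map a := by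
  apply Multiset.map_injective (RCLike.ofReal_injective (K := 𝕜))
  rw [Multiset.map_map, Multiset.map_map, ← hA.roots_charpoly_eq_eigenvalues, hc,
    Polynomial.roots_prod _ _ (Finset.prod_ne_zero_iff.2 fun i _ => X_sub_C_ne_zero _)]
  simp only [roots_X_sub_C, Multiset.bind_singleton, Function.comp_def]

lemma exists_orthonormalBasis_of_charpoly (hA : A.IsHermitian) (ha : Monotone a)
    (hc : A.charpoly = ∏ i, (X - C (a i : 𝕜))) :
    ∃ v : OrthonormalBasis (Fin n) 𝕜 (EuclideanSpace 𝕜 (Fin n)),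
      ∀ i, toEuclideanLin A (v i) = (a i : 𝕜) • v i := by
  set σ := Tuple.sort hA.eigenvalues
  have hσ : hA.eigenvalues ∘ σ = a := by
    refine eq_of_monotone_of_map_univ_eq (Tuple.monotone_sort _) ha ?_
    rw [← hA.map_eigenvalues_eq_of_charpoly hc, ← Multiset.map_map, Multiset.map_univ_val_equiv]
  refine ⟨hA.eigenvectorBasis.reindex σ.symm, fun i => ?_⟩
  rw [OrthonormalBasis.reindex_apply, Equiv.symm_symm, ← hσ]
  apply WithLp.ofLp_injective 2
  rw [ofLp_toLpLin, toLin'_apply, hA.mulVec_eigenvectorBasis, WithLp.ofLp_smul,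
    RCLike.real_smul_eq_coe_smul (K := 𝕜)]
  rfl

theorem abs_sub_le_of_sum_norm_sub_le (hA : A.IsHermitian)
    (hB : B.IsHermitian) (ha : Monotone a) (hb : Monotone b)
    (hcA : A.charpoly = ∏ i, (X - C (a i : 𝕜))) (hcB : B.charpoly = ∏ i, (X - C (b i : 𝕜)))
    {K : ℝ} (hK : ∀ i, ∑ j, ‖(B - A) i j‖ ≤ K) (k : Fin n) : |b k - a k| ≤ K := by
  obtain ⟨v, hv⟩ := hA.exists_orthonormalBasis_of_charpoly ha hcA
  obtain ⟨w, hw⟩ := hB.exists_orthonormalBasis_of_charpoly hb hcB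
  refine abs_eigenvalue_sub_le_of_abs_re_inner_sub_le ha hb hv hw (fun x => ?_) k
  rw [← map_sub, ← inner_sub_right, ← LinearMap.sub_apply, ← map_sub]
  exact (RCLike.abs_re_le_norm _).trans ((hB.sub hA).norm_inner_toEuclideanLin_self_le hK x)

end Matrix.IsHermitian

section Extrema
variable {ι : Type*} {f g : ι → ℝ} {c : ℝ}

lemma bddAbove_range_of_abs_sub_le (h : ∀ i, |f i - g i| ≤ c) (hg : BddAbove (Set.range g)) :
    BddAbove (Set.range f) := by
  obtain ⟨M, hM⟩ := hg
  exact ⟨M + c, by rintro _ ⟨i, rfl⟩; linarith [(abs_le.1 (h i)).2, hM ⟨i, rfl⟩]⟩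

lemma bddBelow_range_of_abs_sub_le (h : ∀ i, |f i - g i| ≤ c) (hg : BddBelow (Set.range g)) :
    BddBelow (Set.range f) := by
  obtain ⟨M, hM⟩ := hg
  exact ⟨M - c, by rintro _ ⟨i, rfl⟩; linarith [(abs_le.1 (h i)).1, hM ⟨i, rfl⟩]⟩

variable [Nonempty ι]

-- No boundedness is needed: if one of `f`, `g` is unbounded so is the other, and both suprema are
-- the junk value `0`.
theorem abs_ciSup_sub_ciSup_le (h : ∀ i, |f i - g i| ≤ c) : |(⨆ i, f i) - ⨆ i, g i| ≤ c := by
  have h' : ∀ i, |g i - f i| ≤ c := fun i => abs_sub_comm (g i) (f i) ▸ h i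
  by_cases hg : BddAbove (Set.range g)
  · have hf := bddAbove_range_of_abs_sub_le h hg
    rw [abs_sub_le_iff, sub_le_iff_le_add, sub_le_iff_le_add]
    exact ⟨ciSup_le fun i => by linarith [(abs_le.1 (h i)).2, le_ciSup hg i],
      ciSup_le fun i => by linarith [(abs_le.1 (h i)).1, le_ciSup hf i]⟩
  · rw [Real.iSup_of_not_bddAbove (mt (bddAbove_range_of_abs_sub_le h') hg),
      Real.iSup_of_not_bddAbove hg, sub_self, abs_zero]
    exact (abs_nonneg _).trans (h (Classical.arbitrary ι))

theorem abs_ciInf_sub_ciInf_le (h : ∀ i, |f i - g i| ≤ c) : |(⨅ i, f i) - ⨅ i, g i| ≤ c := by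
  have h' : ∀ i, |g i - f i| ≤ c := fun i => abs_sub_comm (g i) (f i) ▸ h i
  by_cases hg : BddBelow (Set.range g)
  · have hf := bddBelow_range_of_abs_sub_le h hg
    exact abs_sub_le_iff.2
      ⟨sub_le_comm.1 (le_ciInf fun i => by linarith [(abs_le.1 (h i)).2, ciInf_le hf i]),
        sub_le_comm.1 (le_ciInf fun i => by linarith [(abs_le.1 (h i)).1, ciInf_le hg i])⟩
  · rw [Real.iInf_of_not_bddBelow (mt (bddBelow_range_of_abs_sub_le h') hg),
      Real.iInf_of_not_bddBelow hg, sub_self, abs_zero]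
    exact (abs_nonneg _).trans (h (Classical.arbitrary ι))

end Extrema

section FiberOperator
variable {d ν : ℕ} {E : Type*} {o t : E → Fin ν} {inv : E → E} {τ : E → Fin d → ℤ} {α : E → ℝ}

lemma edgePhase_inv (hτ : ∀ e, τ (inv e) = -τ e) (hα : ∀ e, α (inv e) = -α e)
    (θ : Fin d → ℝ) (e : E) : edgePhase α τ θ (inv e) = -edgePhase α τ θ e := by
  simp only [edgePhase, hα, hτ, Pi.neg_apply, Int.cast_neg, neg_mul, Finset.sum_neg_distrib,
    neg_add]

variable [Fintype E]

lemma fiberSch_isHermitian (hinv : ∀ e, inv (inv e) = e) (ho : ∀ e, o (inv e) = t e)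
    (ht : ∀ e, t (inv e) = o e) (hτ : ∀ e, τ (inv e) = -τ e) (hα : ∀ e, α (inv e) = -α e)
    (Q : Fin ν → ℝ) (θ : Fin d → ℝ) : (fiberSch o t τ α Q θ).IsHermitian := by
  -- `inv` is a bijection between the edges `u → v` and `v → u` that conjugates the phases.
  have hedges : ∀ v u, star (∑ e ∈ Finset.univ.filter (fun e => o e = u ∧ t e = v),
        Complex.exp (Complex.I * (edgePhase α τ θ e : ℝ)))
      = ∑ e ∈ Finset.univ.filter (fun e => o e = v ∧ t e = u),
        Complex.exp (Complex.I * (edgePhase α τ θ e : ℝ)) := by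
    intro v u
    rw [star_sum]
    refine Finset.sum_nbij' inv inv (fun e he => by simpa [ho, ht, and_comm] using he)
      (fun e he => by simpa [ho, ht, and_comm] using he) (fun e _ => hinv e) (fun e _ => hinv e)
      (fun e _ => ?_)
    rw [edgePhase_inv hτ hα, Complex.star_def, ← Complex.exp_conj, map_mul, Complex.conj_I,
      Complex.conj_ofReal, Complex.ofReal_neg]
    congr 1
    ring
  refine Matrix.IsHermitian.ext fun v u => ?_
  by_cases h : v = u
  · subst h
    simp [fiberSch, fiberLap, hedges]
  · simp [fiberSch, fiberLap, hedges, h, Ne.symm h]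

lemma norm_exp_I_mul_sub_exp_I_mul (a b : ℝ) :
    ‖Complex.exp (Complex.I * a) - Complex.exp (Complex.I * b)‖ = 2 * |Real.sin ((a - b) / 2)| := by
  have h : Complex.exp (Complex.I * a) - Complex.exp (Complex.I * b)
      = Complex.exp (Complex.I * b) * (Complex.exp (Complex.I * (a - b : ℝ)) - 1) := by
    rw [mul_sub, mul_one, ← Complex.exp_add]
    congr 2
    push_cast
    ring
  rw [h, norm_mul, Complex.norm_exp_I_mul_ofReal, one_mul, Complex.norm_exp_I_mul_ofReal_sub_one,
    norm_mul, Real.norm_two, Real.norm_eq_abs]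

lemma fiberSch_sub_fiberSch_apply (αo : E → ℝ) (Q : Fin ν → ℝ) (θ : Fin d → ℝ) (v u : Fin ν) :
    (fiberSch o t τ αo Q θ - fiberSch o t τ α Q θ) v u
      = ∑ e ∈ Finset.univ.filter (fun e => o e = v ∧ t e = u),
          (Complex.exp (Complex.I * (edgePhase α τ θ e : ℝ))
            - Complex.exp (Complex.I * (edgePhase αo τ θ e : ℝ))) := by
  simp only [fiberSch, fiberLap, Matrix.sub_apply, Matrix.add_apply, Finset.sum_sub_distrib]
  ring

lemma sum_norm_fiberSch_sub_fiberSch_apply_le {αo : E → ℝ} {F : Finset E}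
    (hF : ∀ e ∉ F, αo e = α e) (Q : Fin ν → ℝ) (θ : Fin d → ℝ) (v : Fin ν) :
    ∑ u, ‖(fiberSch o t τ αo Q θ - fiberSch o t τ α Q θ) v u‖
      ≤ 2 * ∑ e ∈ F.filter (fun e => o e = v), |Real.sin ((αo e - α e) / 2)| := by
  have hterm : ∀ e, ‖Complex.exp (Complex.I * (edgePhase α τ θ e : ℝ))
        - Complex.exp (Complex.I * (edgePhase αo τ θ e : ℝ))‖
      = 2 * |Real.sin ((αo e - α e) / 2)| := by
    intro e
    rw [norm_exp_I_mul_sub_exp_I_mul, ← abs_neg, ← Real.sin_neg]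
    congr 3
    simp only [edgePhase]
    ring
  calc ∑ u, ‖(fiberSch o t τ αo Q θ - fiberSch o t τ α Q θ) v u‖
      ≤ ∑ u, ∑ e ∈ Finset.univ.filter (fun e => o e = v ∧ t e = u),
          2 * |Real.sin ((αo e - α e) / 2)| := by
        gcongr with u
        rw [fiberSch_sub_fiberSch_apply]
        exact (norm_sum_le _ _).trans_eq (Finset.sum_congr rfl fun e _ => hterm e)
    _ = ∑ e ∈ Finset.univ.filter (fun e => o e = v), 2 * |Real.sin ((αo e - α e) / 2)| := by
        rw [← Finset.sum_fiberwise_of_maps_to (g := t) (fun _ _ => Finset.mem_univ _)]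
        simp only [Finset.filter_filter]
    _ = 2 * ∑ e ∈ F.filter (fun e => o e = v), |Real.sin ((αo e - α e) / 2)| := by
        rw [← Finset.mul_sum]
        congr 1
        symm
        apply Finset.sum_subset (Finset.filter_subset_filter _ (Finset.subset_univ F))
        intro e he he'
        have heF : e ∉ F := fun heF =>
          he' (Finset.mem_filter.2 ⟨heF, (Finset.mem_filter.1 he).2⟩)
        simp [hF e heF]

end FiberOperator

theorem magnetic_perturbation_eigenvalue_bound
    {d ν : ℕ} (hν : 1 ≤ ν)
    {E : Type*} [Fintype E] [DecidableEq E]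
    (o t : E → Fin ν) (inv : E → E)
    (hinv : ∀ e, inv (inv e) = e)
    (ho : ∀ e, o (inv e) = t e) (ht : ∀ e, t (inv e) = o e)
    (τ : E → Fin d → ℤ) (hτ : ∀ e, τ (inv e) = - τ e)
    (α αo : E → ℝ) (hα : ∀ e, α (inv e) = - α e) (hαo : ∀ e, αo (inv e) = - αo e)
    (S : Finset E)
    (hout : ∀ e, e ∉ S → inv e ∉ S → α e = 0 ∧ αo e = 0 ∧ τ e = 0)
    (Q : Fin ν → ℝ)
    -- eigenvalues of `H_α(θ)` with multiplicity, in increasing order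
    (lam : (Fin d → ℝ) → Fin ν → ℝ)
    (hmono : ∀ θ, Monotone (lam θ))
    (hroots : ∀ θ, (fiberSch o t τ α Q θ).charpoly
      = ∏ n : Fin ν, (X - C ((lam θ n : ℝ) : ℂ)))
    -- eigenvalues of `H_{α°}(θ)` with multiplicity, in increasing order
    (lamo : (Fin d → ℝ) → Fin ν → ℝ)
    (hmonoo : ∀ θ, Monotone (lamo θ))
    (hrootso : ∀ θ, (fiberSch o t τ αo Q θ).charpoly
      = ∏ n : Fin ν, (X - C ((lamo θ n : ℝ) : ℂ)))
    (Cst : ℝ)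
    (hCst : Cst = 2 * Finset.univ.sup' ⟨⟨0, by omega⟩, Finset.mem_univ _⟩
      (fun u : Fin ν => ∑ e ∈ (S ∪ S.image inv).filter (fun e => o e = u),
        |Real.sin ((αo e - α e) / 2)|)) :
    (∀ (n : Fin ν) (θ : Fin d → ℝ), |lamo θ n - lam θ n| ≤ Cst)
    ∧ (∀ n : Fin ν,
        |(⨆ θ : Fin d → ℝ, lamo θ n) - (⨆ θ : Fin d → ℝ, lam θ n)| ≤ Cst)
    ∧ (∀ n : Fin ν,
        |(⨅ θ : Fin d → ℝ, lamo θ n) - (⨅ θ : Fin d → ℝ, lam θ n)| ≤ Cst) := by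
  have hH : ∀ θ, (fiberSch o t τ α Q θ).IsHermitian :=
    fiberSch_isHermitian hinv ho ht hτ hα Q
  have hHo : ∀ θ, (fiberSch o t τ αo Q θ).IsHermitian :=
    fiberSch_isHermitian hinv ho ht hτ hαo Q
  have hagree : ∀ e ∉ S ∪ S.image inv, αo e = α e := by
    intro e he
    simp only [Finset.mem_union, Finset.mem_image, not_or, not_exists, not_and] at he
    obtain ⟨hα0, hαo0, -⟩ := hout e he.1 fun hinvS => he.2 _ hinvS (hinv e)
    rw [hα0, hαo0]
  have hrow : ∀ θ v, ∑ u, ‖(fiberSch o t τ αo Q θ - fiberSch o t τ α Q θ) v u‖ ≤ Cst :=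
    fun θ v => (sum_norm_fiberSch_sub_fiberSch_apply_le hagree Q θ v).trans <| by
      rw [hCst]
      gcongr
      exact (Finset.le_sup'_iff _).2 ⟨v, Finset.mem_univ v, le_rfl⟩
  have hweyl : ∀ n θ, |lamo θ n - lam θ n| ≤ Cst := fun n θ =>
    (hH θ).abs_sub_le_of_sum_norm_sub_le (hHo θ) (hmono θ) (hmonoo θ) (hroots θ) (hrootso θ)
      (hrow θ) n
  exact ⟨hweyl, fun n => abs_ciSup_sub_ciSup_le (hweyl n),
    fun n => abs_ciInf_sub_ciInf_le (hweyl n)⟩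

end
end

section
/- Let ν ≥ 2 and let A, A₁, A₂ be Hermitian ν×ν complex matrices. Let ψ₀ ∈ ℂ^ν be a unit vector with Aψ₀ = 0 such that 0 is a simple eigenvalue of A (i.e., the kernel of A is spanned by ψ₀), and let ρ = min{|λ| : λ is a nonzero eigenvalue of A} > 0. Suppose there exist vectors ψ₁, ψ₂ ∈ ℂ^ν and a scalar μ ∈ ℂ satisfying A₁ψ₀ + Aψ₁ = 0 and A₂ψ₀ + A₁ψ₁ + Aψ₂ = μψ₀. Then |μ| ≤ ‖A₂‖ + ‖A₁‖²/ρ, where ‖·‖ denotes the operator norm with respect to the Euclidean norm on ℂ^ν. -/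
/-!
Pairing the second-order equation with `ψ₀` and using self-adjointness of `A` and `A₁` together
with the first-order equation gives `μ = ⟪ψ₀, A₂ ψ₀⟫ - ⟪A ψ₁, ψ₁⟫`. In an eigenbasis of `A`, with
eigenvalues `λᵢ` and coordinates `cᵢ` of `ψ₁`, the spectral gap gives `ρ |λᵢ| ≤ λᵢ²` for every `i`,
hence `ρ |⟪A ψ₁, ψ₁⟫| ≤ ∑ ρ |λᵢ| |cᵢ|² ≤ ∑ λᵢ² |cᵢ|² = ‖A ψ₁‖² = ‖A₁ ψ₀‖²`.
-/

open scoped Matrix.Norms.L2Operator InnerProductSpace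
open Matrix Module.End

section
variable {𝕜 E : Type*} [RCLike 𝕜] [NormedAddCommGroup E] [InnerProductSpace 𝕜 E]

theorem LinearMap.IsSymmetric.mul_norm_inner_apply_self_le_norm_sq [FiniteDimensional 𝕜 E]
    {T : E →ₗ[𝕜] E} (hT : T.IsSymmetric) {ρ : ℝ} (hρ₀ : 0 ≤ ρ)
    (hρ : ∀ c : 𝕜, HasEigenvalue T c → c ≠ 0 → ρ ≤ ‖c‖) (x : E) : ρ * ‖⟪T x, x⟫_𝕜‖ ≤ ‖T x‖ ^ 2 := by
  set b := hT.eigenvectorBasis rfl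
  set e := hT.eigenvalues rfl
  have hrepr : ∀ i, b.repr (T x) i = e i * b.repr x i := hT.eigenvectorBasis_apply_self_apply rfl x
  have hgap : ∀ i, ρ * |e i| ≤ |e i| ^ 2 := by
    intro i
    rcases eq_or_ne (e i) 0 with h | h
    · simp [h]
    · have := hρ _ (hT.hasEigenvalue_eigenvalues rfl i) (by exact_mod_cast h)
      rw [RCLike.norm_ofReal] at this
      nlinarith [abs_nonneg (e i)]
  have hterm : ∀ i, ρ * (‖b.repr (T x) i‖ * ‖b.repr x i‖) ≤ ‖b.repr (T x) i‖ ^ 2 := by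
    intro i
    rw [hrepr, norm_mul, RCLike.norm_ofReal]
    nlinarith [hgap i, sq_nonneg ‖b.repr x i‖]
  calc ρ * ‖⟪T x, x⟫_𝕜‖ = ρ * ‖∑ i, ⟪b.repr (T x) i, b.repr x i⟫_𝕜‖ := by
        rw [← b.repr.inner_map_map, PiLp.inner_apply]
    _ ≤ ρ * ∑ i, ‖b.repr (T x) i‖ * ‖b.repr x i‖ := by
        gcongr
        exact (norm_sum_le _ _).trans (Finset.sum_le_sum fun i _ => norm_inner_le_norm _ _)
    _ ≤ ∑ i, ‖b.repr (T x) i‖ ^ 2 := by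
        rw [Finset.mul_sum]
        exact Finset.sum_le_sum fun i _ => hterm i
    _ = ‖T x‖ ^ 2 := by
        rw [← EuclideanSpace.norm_sq_eq, b.repr.norm_map]

theorem second_order_coeff_eq {T T₁ T₂ : E →ₗ[𝕜] E} (hT : T.IsSymmetric) (hT₁ : T₁.IsSymmetric)
    {ψ₀ ψ₁ ψ₂ : E} {μ : 𝕜} (hψ₀ : ‖ψ₀‖ = 1) (hker : T ψ₀ = 0)
    (heq1 : T₁ ψ₀ + T ψ₁ = 0) (heq2 : T₂ ψ₀ + T₁ ψ₁ + T ψ₂ = μ • ψ₀) :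
    μ = ⟪ψ₀, T₂ ψ₀⟫_𝕜 - ⟪T ψ₁, ψ₁⟫_𝕜 := by
  have h := congrArg (inner 𝕜 ψ₀) heq2
  rw [inner_add_right, inner_add_right, inner_smul_right, inner_self_eq_norm_sq_to_K, hψ₀,
    RCLike.ofReal_one, one_pow, mul_one, ← hT, hker, inner_zero_left, add_zero, ← hT₁,
    eq_neg_of_add_eq_zero_left heq1, inner_neg_left] at h
  rw [← h, sub_eq_add_neg]

theorem norm_second_order_coeff_le [FiniteDimensional 𝕜 E] {T T₁ T₂ : E →ₗ[𝕜] E}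
    (hT : T.IsSymmetric) (hT₁ : T₁.IsSymmetric) {ρ : ℝ} (hρ₀ : 0 < ρ)
    (hρ : ∀ c : 𝕜, HasEigenvalue T c → c ≠ 0 → ρ ≤ ‖c‖)
    {ψ₀ ψ₁ ψ₂ : E} {μ : 𝕜} (hψ₀ : ‖ψ₀‖ = 1) (hker : T ψ₀ = 0)
    (heq1 : T₁ ψ₀ + T ψ₁ = 0) (heq2 : T₂ ψ₀ + T₁ ψ₁ + T ψ₂ = μ • ψ₀) :
    ‖μ‖ ≤ ‖⟪ψ₀, T₂ ψ₀⟫_𝕜‖ + ‖T₁ ψ₀‖ ^ 2 / ρ := by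
  have hTψ₁ : ‖T ψ₁‖ = ‖T₁ ψ₀‖ := by rw [eq_neg_of_add_eq_zero_right heq1, norm_neg]
  have hquad : ‖⟪T ψ₁, ψ₁⟫_𝕜‖ ≤ ‖T₁ ψ₀‖ ^ 2 / ρ := by
    rw [le_div_iff₀ hρ₀, mul_comm, ← hTψ₁]
    exact hT.mul_norm_inner_apply_self_le_norm_sq hρ₀.le hρ ψ₁
  rw [second_order_coeff_eq hT hT₁ hψ₀ hker heq1 heq2]
  exact (norm_sub_le _ _).trans (by gcongr)

end

theorem effective_form_perturbation_bound_general
    {ν : ℕ}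
    (A A₁ A₂ : Matrix (Fin ν) (Fin ν) ℂ)
    (hA : A.IsHermitian) (hA₁ : A₁.IsHermitian)
    (ψ₀ : Fin ν → ℂ)
    (hunit : ∑ v, ‖ψ₀ v‖ ^ 2 = 1)
    (hker : A.mulVec ψ₀ = 0)
    -- `ρ` is the minimum of `|λ|` over the nonzero eigenvalues `λ` of `A`
    (ρ : ℝ) (hρpos : 0 < ρ)
    (hρ : ∀ (c : ℂ) (x : Fin ν → ℂ), x ≠ 0 → A.mulVec x = c • x → c ≠ 0 →
      ρ ≤ ‖c‖)
    (ψ₁ ψ₂ : Fin ν → ℂ) (μ : ℂ)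
    (heq1 : A₁.mulVec ψ₀ + A.mulVec ψ₁ = 0)
    (heq2 : A₂.mulVec ψ₀ + A₁.mulVec ψ₁ + A.mulVec ψ₂ = μ • ψ₀) :
    ‖μ‖ ≤ ‖A₂‖ + ‖A₁‖ ^ 2 / ρ := by
  set Ψ₀ := WithLp.toLp 2 ψ₀
  have hΨ₀ : ‖Ψ₀‖ = 1 := by simp [Ψ₀, EuclideanSpace.norm_eq, hunit]
  have hgap : ∀ c, HasEigenvalue A.toEuclideanLin c → c ≠ 0 → ρ ≤ ‖c‖ := by
    intro c hc hc0
    obtain ⟨v, hv_mem, hv_ne⟩ := hc.exists_hasEigenvector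
    exact hρ c (WithLp.ofLp v) (by simpa using hv_ne)
      (congrArg WithLp.ofLp (mem_eigenspace_iff.mp hv_mem)) hc0
  have hμ := norm_second_order_coeff_le (T₂ := A₂.toEuclideanLin)
    (isSymmetric_toEuclideanLin_iff.mpr hA) (isSymmetric_toEuclideanLin_iff.mpr hA₁) hρpos hgap
    hΨ₀ (congrArg (WithLp.toLp 2) hker) (congrArg (WithLp.toLp 2) heq1)
    (congrArg (WithLp.toLp 2) heq2)
  have hop : ∀ B : Matrix (Fin ν) (Fin ν) ℂ, ‖B.toEuclideanLin Ψ₀‖ ≤ ‖B‖ := fun B =>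
    (B.l2_opNorm_mulVec Ψ₀).trans_eq (by rw [hΨ₀, mul_one])
  have h₂ : ‖⟪Ψ₀, A₂.toEuclideanLin Ψ₀⟫_ℂ‖ ≤ ‖A₂‖ :=
    (norm_inner_le_norm _ _).trans (by rw [hΨ₀, one_mul]; exact hop A₂)
  exact hμ.trans (by gcongr; exact hop A₁)

theorem effective_form_perturbation_bound
    {ν : ℕ} (hν : 2 ≤ ν)
    (A A₁ A₂ : Matrix (Fin ν) (Fin ν) ℂ)
    (hA : A.IsHermitian) (hA₁ : A₁.IsHermitian) (hA₂ : A₂.IsHermitian)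
    (ψ₀ : Fin ν → ℂ)
    (hunit : ∑ v, ‖ψ₀ v‖ ^ 2 = 1)
    (hker : A.mulVec ψ₀ = 0)
    -- `0` is a simple eigenvalue of `A`: the kernel of `A` is spanned by `ψ₀`
    (hsimple : ∀ x : Fin ν → ℂ, A.mulVec x = 0 → ∃ c : ℂ, x = c • ψ₀)
    -- `ρ` is the minimum of `|λ|` over the nonzero eigenvalues `λ` of `A`
    (ρ : ℝ) (hρpos : 0 < ρ)
    (hρ : ∀ (c : ℂ) (x : Fin ν → ℂ), x ≠ 0 → A.mulVec x = c • x → c ≠ 0 →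
      ρ ≤ ‖c‖)
    (ψ₁ ψ₂ : Fin ν → ℂ) (μ : ℂ)
    (heq1 : A₁.mulVec ψ₀ + A.mulVec ψ₁ = 0)
    (heq2 : A₂.mulVec ψ₀ + A₁.mulVec ψ₁ + A.mulVec ψ₂ = μ • ψ₀) :
    ‖μ‖ ≤ ‖A₂‖ + ‖A₁‖ ^ 2 / ρ :=
  effective_form_perturbation_bound_general A A₁ A₂ hA hA₁ ψ₀ hunit hker ρ hρpos hρ ψ₁ ψ₂ μ heq1
    heq2
end

section
/- Let d ≥ 1 and ν ≥ 3 be integers and let q₁, …, q_ν be real numbers. For θ = (θ₁,…,θ_d) ∈ ℝ^d let H(θ) be the ν×ν Hermitian matrix acting on f ∈ ℂ^ν by (H(θ)f)_j = (1 + q_j) f_j − f_ν for 1 ≤ j ≤ ν−1 and (H(θ)f)_ν = (ν−1+2d − 2Σ_{s=1}^d cos θ_s + q_ν) f_ν − Σ_{j=1}^{ν−1} f_j. If some value q* occurs at least m times (m ≥ 2) among q₁, …, q_{ν−1}, then for every θ ∈ ℝ^d the number q* + 1 is an eigenvalue of H(θ) of multiplicity at least m − 1; i.e., q* + 1 is a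 flat band of the Schrödinger operator of multiplicity m − 1. -/
open scoped BigOperators
open Matrix Polynomial

noncomputable section

/-- The fiber Schrödinger matrix `H(θ)` on the fundamental graph consisting of the
vertices `v₁, …, v_ν`, edges `(v_j, v_ν)` for `j < ν` (zero index) and `d` loops at `v_ν`
with standard basis indices:
`(H(θ)f)_j = (1+q_j) f_j − f_ν` for `j < ν−1` and
`(H(θ)f)_ν = (ν−1+2d − 2∑ cos θ_s + q_ν) f_ν − ∑_{j<ν−1} f_j`. -/
def exSch (d ν : ℕ) (q : Fin ν → ℝ) (θ : Fin d → ℝ) : Matrix (Fin ν) (Fin ν) ℂ :=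
  fun j k =>
    if (j : ℕ) = ν - 1 then
      if (k : ℕ) = ν - 1 then
        (((ν : ℝ) - 1 + 2 * d - 2 * ∑ s, Real.cos (θ s) + q j : ℝ) : ℂ)
      else -1
    else
      if k = j then ((1 + q j : ℝ) : ℂ)
      else if (k : ℕ) = ν - 1 then -1 else 0

theorem flat_band_of_repeated_potential
    {d ν : ℕ} (hd : 1 ≤ d) (hν : 3 ≤ ν)
    (q : Fin ν → ℝ) (qstar : ℝ) (m : ℕ) (hm : 2 ≤ m)
    (hcount : m ≤ (Finset.univ.filter
        (fun j : Fin ν => (j : ℕ) < ν - 1 ∧ q j = qstar)).card) :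
    ∀ θ : Fin d → ℝ,
      m - 1 ≤ (exSch d ν q θ).charpoly.rootMultiplicity ((qstar + 1 : ℝ) : ℂ) := by
  intro θ
  classical
  set A := exSch d ν q θ with hA
  set μ : ℂ := ((qstar + 1 : ℝ) : ℂ) with hμ
  set S := Finset.univ.filter (fun j : Fin ν => (j : ℕ) < ν - 1 ∧ q j = qstar) with hSdef
  have hS2 : 2 ≤ S.card := le_trans hm hcount
  obtain ⟨j₀, hj₀⟩ : S.Nonempty := Finset.card_pos.mp (by omega)
  set T := S.erase j₀ with hTdef
  have hj₀T : j₀ ∉ T := Finset.notMem_erase _ _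
  have hTcard : m - 1 ≤ T.card := by
    rw [hTdef, Finset.card_erase_of_mem hj₀]; omega
  -- description of rows of the charmatrix for indices in S
  have rowA : ∀ j ∈ S, ∀ k, charmatrix A j k =
      if k = j then X - C μ else if (k : ℕ) = ν - 1 then (1 : ℂ[X]) else 0 := by
    intro j hj k
    obtain ⟨hjlt, hjq⟩ := (Finset.mem_filter.mp hj).2
    have hjne : (j : ℕ) ≠ ν - 1 := by omega
    by_cases hkj : k = j
    · subst hkj
      rw [if_pos rfl, charmatrix_apply_eq]
      have : A k k = μ := by
        simp only [hA, exSch, if_neg hjne, if_pos rfl, hjq, hμ]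
        push_cast; ring
      rw [this]
    · rw [if_neg hkj, charmatrix_apply_ne _ _ _ (fun h => hkj h.symm)]
      have : A j k = if (k : ℕ) = ν - 1 then (-1 : ℂ) else 0 := by
        simp only [hA, exSch, if_neg hjne, if_neg hkj]
      rw [this]
      by_cases hk : (k : ℕ) = ν - 1 <;> simp [hk]
  -- the matrix after row reduction and factoring out (X - μ)
  set B₂ : Matrix (Fin ν) (Fin ν) ℂ[X] := fun i k =>
    if i ∈ T then (if k = i then 1 else if k = j₀ then -1 else 0)
    else charmatrix A i k with hB₂
  set v : Fin ν → ℂ[X] := fun i => if i ∈ T then X - C μ else 1 with hv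
  have step1 : (charmatrix A).det = (Matrix.of fun i k => v i * B₂ i k).det := by
    apply Matrix.det_eq_of_forall_row_eq_smul_add_const
      (fun i => if i ∈ T then (1 : ℂ[X]) else 0) j₀ (by simp [hj₀T])
    intro i k
    by_cases hi : i ∈ T
    · have hiS : i ∈ S := Finset.mem_of_mem_erase hi
      have hij₀ : i ≠ j₀ := Finset.ne_of_mem_erase hi
      have hi' : (i : ℕ) < ν - 1 := (Finset.mem_filter.mp hiS).2.1
      have hj₀' : (j₀ : ℕ) < ν - 1 := (Finset.mem_filter.mp hj₀).2.1
      simp only [Matrix.of_apply, hv, hB₂, if_pos hi, if_neg hj₀T, if_pos hi, one_mul,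
        rowA i hiS k, rowA j₀ hj₀ k]
      by_cases hki : k = i
      · subst hki
        have h1 : k ≠ j₀ := hij₀
        have h2 : (k : ℕ) ≠ ν - 1 := by omega
        simp [h1, h2]
      · by_cases hkj₀ : k = j₀
        · subst hkj₀
          have h2 : (k : ℕ) ≠ ν - 1 := by omega
          simp [hki, h2]
        · by_cases hk : (k : ℕ) = ν - 1 <;> simp [hki, hkj₀, hk]
    · simp [Matrix.of_apply, hv, hB₂, if_neg hi, if_neg hj₀T, hi, hj₀T]
  have step2 : (Matrix.of fun i k => v i * B₂ i k).det = (X - C μ) ^ T.card * B₂.det := by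
    rw [Matrix.det_mul_column v B₂]
    congr 1
    rw [hv]
    rw [Finset.prod_ite_mem Finset.univ T (fun _ => X - C μ), Finset.univ_inter,
      Finset.prod_const]
  have hdvd : (X - C μ) ^ (m - 1) ∣ A.charpoly := by
    rw [Matrix.charpoly, step1, step2]
    exact dvd_mul_of_dvd_left (pow_dvd_pow _ hTcard) _
  have hne : A.charpoly ≠ 0 := A.charpoly_monic.ne_zero
  rw [Polynomial.le_rootMultiplicity_iff hne]
  exact hdvd

end
end

section
/- Let the fundamental graph data be given, and suppose S = {e₁, …, e_d} ⊆ A* consists of d edges, no two of which are equal or inverse to each other, such that the index vectors τ(e₁), …, τ(e_d) ∈ ℤ^d are linearly independent over ℝ, and such that α(e) = 0 and τ(e) = 0 for every e ∉ S ∪ S̄ (this is the case when the Betti number equals d). Then there exists θ₀ ∈ ℝ^d such that Δ_α(θ + θ₀) = Δ_0(θ) for all θ ∈ ℝ^d, where Δ_0 is the fiber Laplacian with zero 1-form. Consequently, for any potential Q : V* → ℝ, ⋃_{θ ∈ ℝ^d} spec(Δ_α(θ) + diag(Q)) = ⋃_{θ ∈ ℝ^d} spec(Δ_0(θ) + diag(Q));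 i.e., the magnetic Schrödinger operator is unitarily equivalent to the Schrödinger operator without magnetic field. -/
open scoped BigOperators
open Matrix

noncomputable section

theorem magnetic_field_removable_when_betti_eq_d
    {d ν : ℕ} (hd : 1 ≤ d) (hν : 1 ≤ ν)
    {E : Type*} [Fintype E] [DecidableEq E]
    (o t : E → Fin ν) (inv : E → E)
    (hinv : ∀ e, inv (inv e) = e) (hfpf : ∀ e, inv e ≠ e)
    (ho : ∀ e, o (inv e) = t e) (ht : ∀ e, t (inv e) = o e)
    (τ : E → Fin d → ℤ) (hτ : ∀ e, τ (inv e) = - τ e)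
    (α : E → ℝ) (hα : ∀ e, α (inv e) = - α e)
    -- `S = {ε 0, …, ε (d-1)}` consists of `d` edges, no two equal or mutually inverse
    (ε : Fin d → E) (hεinj : Function.Injective ε)
    (hεninv : ∀ i j, ε i ≠ inv (ε j))
    -- the index vectors `τ(ε i)` are linearly independent over `ℝ`
    (hind : LinearIndependent ℝ (fun i : Fin d => fun j : Fin d => (τ (ε i) j : ℝ)))
    -- `α` and `τ` vanish outside `S ∪ S̄`
    (hout : ∀ e, (∀ i, e ≠ ε i ∧ e ≠ inv (ε i)) → α e = 0 ∧ τ e = 0) :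
    ∃ θ₀ : Fin d → ℝ,
      (∀ θ : Fin d → ℝ, fiberLap o t τ α (θ + θ₀) = fiberLap o t τ (fun _ => 0) θ)
      ∧ ∀ Q : Fin ν → ℝ,
        (⋃ θ : Fin d → ℝ, {x : ℝ | (x : ℂ) ∈
            spectrum ℂ (fiberLap o t τ α θ + Matrix.diagonal (fun v => (Q v : ℂ)))})
        = ⋃ θ : Fin d → ℝ, {x : ℝ | (x : ℂ) ∈
            spectrum ℂ (fiberLap o t τ (fun _ => 0) θ
              + Matrix.diagonal (fun v => (Q v : ℂ)))} := by
  classical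
  set M : Matrix (Fin d) (Fin d) ℝ := fun i j => (τ (ε i) j : ℝ) with hM
  have hMunit : IsUnit M := Matrix.linearIndependent_rows_iff_isUnit.mp hind
  set θ₀ : Fin d → ℝ := M⁻¹ *ᵥ (fun i => - α (ε i)) with hθ₀
  have hsolve : ∀ i, ∑ j, (τ (ε i) j : ℝ) * θ₀ j = - α (ε i) := by
    intro i
    have h1 : M *ᵥ θ₀ = fun i => - α (ε i) := by
      rw [hθ₀, Matrix.mulVec_mulVec,
        Matrix.mul_nonsing_inv _ ((Matrix.isUnit_iff_isUnit_det M).mp hMunit),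
        Matrix.one_mulVec]
    have := congrFun h1 i
    simpa [Matrix.mulVec, dotProduct, hM] using this
  have hkey : ∀ e : E, α e + ∑ j, (τ e j : ℝ) * θ₀ j = 0 := by
    intro e
    by_cases h1 : ∃ i, e = ε i
    · obtain ⟨i, rfl⟩ := h1
      rw [hsolve i]; ring
    · by_cases h2 : ∃ i, e = inv (ε i)
      · obtain ⟨i, rfl⟩ := h2
        have hτ' : ∀ j, (τ (inv (ε i)) j : ℝ) = - (τ (ε i) j : ℝ) := by
          intro j; rw [hτ]; push_cast [Pi.neg_apply]; ring
        simp only [hα, hτ']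
        have : ∑ j, -(τ (ε i) j : ℝ) * θ₀ j = - ∑ j, (τ (ε i) j : ℝ) * θ₀ j := by
          rw [← Finset.sum_neg_distrib]; apply Finset.sum_congr rfl; intros; ring
        rw [this, hsolve i]; ring
      · have hz := hout e (by
          intro i
          exact ⟨fun h => h1 ⟨i, h⟩, fun h => h2 ⟨i, h⟩⟩)
        simp [hz.1, hz.2]
  have hphase : ∀ (θ : Fin d → ℝ) (e : E),
      edgePhase α τ (θ + θ₀) e = edgePhase (fun _ => 0) τ θ e := by
    intro θ e
    simp only [edgePhase, Pi.add_apply, zero_add]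
    have : ∑ j, (τ e j : ℝ) * (θ j + θ₀ j)
        = (∑ j, (τ e j : ℝ) * θ j) + ∑ j, (τ e j : ℝ) * θ₀ j := by
      rw [← Finset.sum_add_distrib]; apply Finset.sum_congr rfl; intros; ring
    rw [this]
    have := hkey e
    linarith
  have hmain : ∀ θ : Fin d → ℝ,
      fiberLap o t τ α (θ + θ₀) = fiberLap o t τ (fun _ => 0) θ := by
    intro θ
    funext v u
    simp only [fiberLap]
    congr 1
    apply Finset.sum_congr rfl
    intro e _
    rw [hphase θ e]
  refine ⟨θ₀, hmain, ?_⟩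
  intro Q
  have hshift : ∀ θ : Fin d → ℝ,
      fiberLap o t τ α θ = fiberLap o t τ (fun _ => 0) (θ - θ₀) := by
    intro θ
    have := hmain (θ - θ₀)
    rwa [sub_add_cancel] at this
  ext x
  simp only [Set.mem_iUnion, Set.mem_setOf_eq]
  constructor
  · rintro ⟨θ, hθ⟩
    exact ⟨θ - θ₀, by rwa [hshift θ] at hθ⟩
  · rintro ⟨θ, hθ⟩
    refine ⟨θ + θ₀, ?_⟩
    rw [hshift (θ + θ₀), add_sub_cancel_right]
    exact hθ

end
end

section
/- Let the fundamental graph data be given and assume the graph is regular of degree κ₊, i.e., κ_v = κ₊ for every v ∈ V*. Fix an orientation E ⊆ A* (a subset containing exactly one of each pair {e, ē}) and define the 1-form α̂ by α̂(e) = π − α(e) for e ∈ E and α̂(ē) = −α̂(e). Then for every θ ∈ ℝ^d, spec(κ₊·I − Δ_{α̂}(−θ)) = −spec(κ₊·I − Δ_α(θ)); i.e., the spectra of the fiber magnetic Laplacians Δ_α(θ) and Δ_{α̂}(−θ) are mutually symmetric with respect to κ₊. -/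
open scoped BigOperators
open Matrix

noncomputable section

lemma spectrum_transpose' {ν : ℕ} (M : Matrix (Fin ν) (Fin ν) ℂ) :
    spectrum ℂ Mᵀ = spectrum ℂ M := by
  ext z
  simp only [spectrum.mem_iff, Matrix.isUnit_iff_isUnit_det, not_iff_not]
  have : (algebraMap ℂ (Matrix (Fin ν) (Fin ν) ℂ) z - Mᵀ) = (algebraMap ℂ _ z - M)ᵀ := by
    rw [Matrix.transpose_sub, Matrix.algebraMap_eq_diagonal]
    simp [Matrix.diagonal_transpose]
  rw [this, Matrix.det_transpose]

theorem spectral_symmetry_for_regular_graphs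
    {d ν : ℕ} (hd : 1 ≤ d) (hν : 1 ≤ ν)
    {E : Type*} [Fintype E] [DecidableEq E]
    (o t : E → Fin ν) (inv : E → E)
    (hinv : ∀ e, inv (inv e) = e) (hfpf : ∀ e, inv e ≠ e)
    (ho : ∀ e, o (inv e) = t e) (ht : ∀ e, t (inv e) = o e)
    (τ : E → Fin d → ℤ) (hτ : ∀ e, τ (inv e) = - τ e)
    (α : E → ℝ) (hα : ∀ e, α (inv e) = - α e)
    -- the graph is regular of degree `κ₊`
    (κ : ℕ) (hreg : ∀ v, vertexDeg o v = κ)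
    -- `O` is an orientation: it contains exactly one of each pair `{e, ē}`
    (O : Finset E) (hO : ∀ e, e ∈ O ↔ inv e ∉ O)
    -- `α̂(e) = π − α(e)` on `O`, extended as a 1-form
    (α' : E → ℝ) (hα'O : ∀ e ∈ O, α' e = Real.pi - α e)
    (hα' : ∀ e, α' (inv e) = - α' e) :
    ∀ θ : Fin d → ℝ,
      spectrum ℂ ((κ : ℂ) • (1 : Matrix (Fin ν) (Fin ν) ℂ) - fiberLap o t τ α' (-θ))
        = - spectrum ℂ ((κ : ℂ) • (1 : Matrix (Fin ν) (Fin ν) ℂ) - fiberLap o t τ α θ) := by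
  intro θ
  set A : Matrix (Fin ν) (Fin ν) ℂ :=
    (κ : ℂ) • (1 : Matrix (Fin ν) (Fin ν) ℂ) - fiberLap o t τ α θ with hA
  set A' : Matrix (Fin ν) (Fin ν) ℂ :=
    (κ : ℂ) • (1 : Matrix (Fin ν) (Fin ν) ℂ) - fiberLap o t τ α' (-θ) with hA'
  -- key exponential identity
  have key : ∀ e : E, Complex.exp (Complex.I * (edgePhase α' τ (-θ) e : ℝ))
      = - Complex.exp (Complex.I * (edgePhase α τ θ (inv e) : ℝ)) := by
    intro e
    have hphase : edgePhase α τ θ (inv e) = - α e - ∑ j, (τ e j : ℝ) * θ j := by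
      simp only [edgePhase, hα e, hτ e, Pi.neg_apply, Int.cast_neg, neg_mul]
      rw [Finset.sum_neg_distrib]
      ring
    rcases (em (e ∈ O)) with hmem | hmem
    · have hα'e : α' e = Real.pi - α e := hα'O e hmem
      have : (edgePhase α' τ (-θ) e : ℝ) = Real.pi + edgePhase α τ θ (inv e) := by
        rw [hphase]
        simp [edgePhase, hα'e]
        ring
      rw [this]
      push_cast
      rw [mul_add, Complex.exp_add, mul_comm Complex.I, Complex.exp_pi_mul_I]
      ring
    · have hmem' : inv e ∈ O := by
        by_contra h
        exact hmem ((hO e).mpr h)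
      have hα'e : α' e = - Real.pi - α e := by
        have h1 : α' (inv e) = Real.pi - α (inv e) := hα'O (inv e) hmem'
        have h2 : α' (inv e) = - α' e := hα' e
        have h3 : α (inv e) = - α e := hα e
        rw [h2, h3] at h1
        linarith
      have : (edgePhase α' τ (-θ) e : ℝ) = -Real.pi + edgePhase α τ θ (inv e) := by
        rw [hphase]
        simp [edgePhase, hα'e]
        ring
      rw [this]
      push_cast
      rw [mul_add, Complex.exp_add]
      have : Complex.exp (Complex.I * (-Real.pi : ℂ)) = -1 := by
        rw [show Complex.I * (-Real.pi : ℂ) = -(Real.pi * Complex.I) by ring,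
          Complex.exp_neg, Complex.exp_pi_mul_I]
        norm_num
      rw [this]; ring
  -- the matrix identity A' = -Aᵀ
  have hmat : A' = - Aᵀ := by
    rw [hA', hA]
    ext v u
    have hAvu : ∀ (β : E → ℝ) (φ : Fin d → ℝ) (v u : Fin ν),
        ((κ : ℂ) • (1 : Matrix (Fin ν) (Fin ν) ℂ) - fiberLap o t τ β φ) v u
          = ∑ e ∈ Finset.univ.filter (fun e => o e = v ∧ t e = u),
              Complex.exp (Complex.I * (edgePhase β τ φ e : ℝ)) := by
      intro β φ v u
      simp only [Matrix.sub_apply, Matrix.smul_apply, Matrix.one_apply, fiberLap,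
        hreg v, smul_eq_mul]
      ring
    rw [hAvu, Matrix.neg_apply, Matrix.transpose_apply, hAvu]
    rw [← Finset.sum_neg_distrib]
    refine Finset.sum_bij' (fun e _ => inv e) (fun e _ => inv e) ?_ ?_ ?_ ?_ ?_
    · intro e he
      simp only [Finset.mem_filter, Finset.mem_univ, true_and] at he ⊢
      exact ⟨by rw [ho, he.2], by rw [ht, he.1]⟩
    · intro e he
      simp only [Finset.mem_filter, Finset.mem_univ, true_and] at he ⊢
      exact ⟨by rw [ho, he.2], by rw [ht, he.1]⟩
    · intro e _; exact hinv e
    · intro e _; exact hinv e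
    · intro e _
      rw [key e]
  rw [hmat, ← spectrum_transpose' A, spectrum.neg_eq]

end
end
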